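/- Let K be an algebraically closed field, let V be a finite-dimensional K-vector space, let G = GL(V), and let H ⊆ G be a closed subgroup. Then H is G-completely reducible if and only if V is a semisimple H-module. -/
import Mathlib


/-!
Statement 13 (McNinch, "Completely reducible Lie subalgebras", §1).

Let `K` be an algebraically closed field, `V` a finite-dimensional `K`-vector space,
`G = GL(V)`, and `H ⊆ G` a closed subgroup.  Then `H` is `G`-completely reducible if and only
if `V` is a semisimple `H`-module.

Here `GL(V)` is realized concretely as the group `V ≃ₗ[K] V` of linear automorphisms.  Its
parabolic subgroups are the subgroups `P(γ)` attached to the algebraic cocharacters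
`γ : 𝔾_m → GL(V)`; such cocharacters correspond to finite `ℤ`-gradings `V = ⊕ V_i` (the
cocharacter acts on `V_i` by `t ↦ tⁱ`), `P(γ)` is the stabilizer of the associated flag
`V_{≥ i} = ⊕_{j ≥ i} V_j`, and the Levi factors of `P(γ)` are the simultaneous stabilizers
`Z(γ′)` of the weight spaces of gradings `γ′` defining the same flag.  Zariski-closedness of
`H` is expressed via the closed embedding `g ↦ (g, g⁻¹)` of `GL(V)` into `End(V) × End(V)`
and polynomial functions.  Semisimplicity of `V` as an `H`-module is expressed by the
property that every `H`-invariant subspace admits an `H`-invariant complement.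
-/

variable (K V : Type*) [Field K] [AddCommGroup V] [Module K V]

structure ZGrading where
  w : ℤ → Submodule K V
  internal : DirectSum.IsInternal w
  finiteSupport : {i : ℤ | w i ≠ ⊥}.Finite

variable {K V}

def ZGrading.filt (gr : ZGrading K V) (i : ℤ) : Submodule K V :=
  ⨆ j ≥ i, gr.w j

/-- The parabolic subgroup of `GL(V)` attached to a grading: the stabilizer of the flag
`V_{≥ i}`. -/
def parabolicOf (gr : ZGrading K V) : Subgroup (V ≃ₗ[K] V) where
  carrier := {g | ∀ i : ℤ, ∀ v : V, v ∈ gr.filt i ↔ g v ∈ gr.filt i}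
  one_mem' := by intro i v; rfl
  mul_mem' := by
    intro a b ha hb i v
    constructor
    · intro hv
      exact (ha i (b v)).mp ((hb i v).mp hv)
    · intro hv
      exact (hb i v).mpr ((ha i (b v)).mpr hv)
  inv_mem' := by
    intro a ha i v
    have h2 := ha i (a⁻¹ v)
    have : a (a⁻¹ v) = v := by
      show (a * a⁻¹) v = v
      rw [mul_inv_cancel]
      rfl
    rw [this] at h2
    exact h2.symm

/-- The Levi subgroup of `GL(V)` attached to a grading: the simultaneous stabilizer of the
weight spaces `V_i`, i.e. the centralizer of the corresponding cocharacter. -/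
def leviOf (gr : ZGrading K V) : Subgroup (V ≃ₗ[K] V) where
  carrier := {g | ∀ i : ℤ, ∀ v : V, v ∈ gr.w i ↔ g v ∈ gr.w i}
  one_mem' := by intro i v; rfl
  mul_mem' := by
    intro a b ha hb i v
    constructor
    · intro hv
      exact (ha i (b v)).mp ((hb i v).mp hv)
    · intro hv
      exact (hb i v).mpr ((ha i (b v)).mpr hv)
  inv_mem' := by
    intro a ha i v
    have h2 := ha i (a⁻¹ v)
    have : a (a⁻¹ v) = v := by
      show (a * a⁻¹) v = v
      rw [mul_inv_cancel]
      rfl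
    rw [this] at h2
    exact h2.symm

/-- `cocharInto G gr`: the cocharacter `𝔾_m → GL(V)` attached to the grading `gr` (acting on
`V_i` by `t ↦ tⁱ`) takes its values in the subgroup `G ⊆ GL(V)`; i.e. `gr` arises from a
cocharacter of `G`. -/
def cocharInto (G : Subgroup (V ≃ₗ[K] V)) (gr : ZGrading K V) : Prop :=
  ∀ t : Kˣ, ∃ g ∈ G, ∀ i : ℤ, ∀ v ∈ gr.w i, g v = ((t ^ i : Kˣ) : K) • v

/-- `Q` is a parabolic subgroup of the (reductive) subgroup `G ⊆ GL(V)`: `Q = P_G(γ) = G ∩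
P(γ)` for a cocharacter `γ` of `G`, given by a grading of `V`. -/
def IsParabolicIn (G Q : Subgroup (V ≃ₗ[K] V)) : Prop :=
  ∃ gr : ZGrading K V, cocharInto G gr ∧ Q = G ⊓ parabolicOf gr

/-- `L` is a Levi factor of the parabolic subgroup `Q` of `G ⊆ GL(V)`: for some cocharacter
`γ` of `G` (given by a grading of `V`) with `Q = G ∩ P(γ)`, `L = Z_G(γ) = G ∩ L(γ)`. -/
def IsLeviIn (G L Q : Subgroup (V ≃ₗ[K] V)) : Prop :=
  ∃ gr : ZGrading K V, cocharInto G gr ∧ Q = G ⊓ parabolicOf gr ∧ L = G ⊓ leviOf gr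

/-- A subgroup `H` of the (reductive) group `G ⊆ GL(V)` is `G`-completely reducible:
whenever `H` is contained in a parabolic subgroup `Q` of `G`, there is a Levi factor `L` of
`Q` with `H ⊆ L`. -/
def IsCrIn (G H : Subgroup (V ≃ₗ[K] V)) : Prop :=
  ∀ Q : Subgroup (V ≃ₗ[K] V), IsParabolicIn G Q → H ≤ Q →
    ∃ L : Subgroup (V ≃ₗ[K] V), IsLeviIn G L Q ∧ H ≤ L

/-- The special linear group `SL(V)` as the subgroup of `GL(V)` of automorphisms of
determinant `1`. -/
def slSubgroup : Subgroup (V ≃ₗ[K] V) where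
  carrier := {g | LinearMap.det (g : V →ₗ[K] V) = 1}
  one_mem' := by
    show LinearMap.det ((1 : V ≃ₗ[K] V) : V →ₗ[K] V) = 1
    have : ((1 : V ≃ₗ[K] V) : V →ₗ[K] V) = LinearMap.id := rfl
    rw [this, LinearMap.det_id]
  mul_mem' := by
    intro a b ha hb
    show LinearMap.det ((a * b : V ≃ₗ[K] V) : V →ₗ[K] V) = 1
    have : ((a * b : V ≃ₗ[K] V) : V →ₗ[K] V) =
        (a : V →ₗ[K] V) ∘ₗ (b : V →ₗ[K] V) := rfl
    rw [this, LinearMap.det_comp, ha, hb, mul_one]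
  inv_mem' := by
    intro a ha
    show LinearMap.det ((a⁻¹ : V ≃ₗ[K] V) : V →ₗ[K] V) = 1
    have h1 : ((a⁻¹ : V ≃ₗ[K] V) : V →ₗ[K] V) ∘ₗ (a : V →ₗ[K] V) = LinearMap.id := by
      ext v
      show a⁻¹ (a v) = v
      show (a⁻¹ * a) v = v
      rw [inv_mul_cancel]
      rfl
    have := congrArg LinearMap.det h1
    rw [LinearMap.det_comp, ha, mul_one, LinearMap.det_id] at this
    exact this

/-- The embedding `g ↦ (g, g⁻¹)` of `GL(V)` into `End(V) × End(V)`, realizing `GL(V)` as an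
affine variety. -/
def glEmbed (g : V ≃ₗ[K] V) : Module.End K V × Module.End K V :=
  ((g : V →ₗ[K] V), ((g⁻¹ : V ≃ₗ[K] V) : V →ₗ[K] V))

/-- A function `f : V → K` is a polynomial (regular) function on the `K`-vector space `V`:
it lies in the `K`-subalgebra of `V → K` generated by the linear functionals. -/
def IsPolyFun (K : Type*) [CommRing K] {V : Type*} [AddCommGroup V] [Module K V]
    (f : V → K) : Prop :=
  f ∈ Algebra.adjoin K (Set.range fun φ : Module.Dual K V => (φ : V → K))

/-- A subset of the `K`-vector space `V` is Zariski closed if it is the common zero locus of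
a family of polynomial functions on `V`. -/
def IsZariskiClosed (K : Type*) [CommRing K] {V : Type*} [AddCommGroup V] [Module K V]
    (S : Set V) : Prop :=
  ∃ T : Set (V → K), (∀ f ∈ T, IsPolyFun K f) ∧ S = {v | ∀ f ∈ T, f v = 0}



/-! ### Auxiliary lemmas -/

section Aux

open DirectSum

variable {K V : Type*} [Field K] [AddCommGroup V] [Module K V]

namespace ZGrading

variable (gr : ZGrading K V)

lemma w_le_filt {i j : ℤ} (h : i ≤ j) : gr.w j ≤ gr.filt i :=
  le_biSup _ h

lemma filt_anti : Antitone gr.filt := fun _ _ h =>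
  biSup_mono fun _ hj => le_trans h hj

lemma filt_eq_sup (i : ℤ) : gr.filt i = gr.w i ⊔ gr.filt (i + 1) := by
  refine le_antisymm (iSup₂_le fun j hj => ?_)
    (sup_le (gr.w_le_filt le_rfl) (gr.filt_anti (by omega)))
  rcases eq_or_lt_of_le hj with h | h
  · exact h ▸ le_sup_left
  · exact le_trans (gr.w_le_filt (by omega)) le_sup_right

lemma exists_bound_above : ∃ N : ℤ, ∀ j, N < j → gr.w j = ⊥ := by
  obtain ⟨N, hN⟩ := gr.finiteSupport.bddAbove
  exact ⟨N, fun j hj => by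
    by_contra h
    exact absurd (hN h) (not_le.2 hj)⟩

lemma exists_bound_below : ∃ M : ℤ, ∀ j, j < M → gr.w j = ⊥ := by
  obtain ⟨M, hM⟩ := gr.finiteSupport.bddBelow
  exact ⟨M, fun j hj => by
    by_contra h
    exact absurd (hM h) (not_le.2 hj)⟩

lemma filt_eq_bot {N i : ℤ} (hN : ∀ j, N < j → gr.w j = ⊥) (h : N < i) : gr.filt i = ⊥ :=
  le_bot_iff.1 <| iSup₂_le fun j hj => by rw [hN j (by omega)]

lemma filt_eq_top {M i : ℤ} (hM : ∀ j, j < M → gr.w j = ⊥) (h : i ≤ M) : gr.filt i = ⊤ := by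
  have h2 : (⊤ : Submodule K V) ≤ gr.filt i := by
    rw [← gr.internal.submodule_iSup_eq_top]
    refine iSup_le fun j => ?_
    by_cases hj : i ≤ j
    · exact gr.w_le_filt hj
    · rw [hM j (by omega)]; exact bot_le
  exact le_antisymm le_top h2

lemma disjoint_w_filt_succ (i : ℤ) : Disjoint (gr.w i) (gr.filt (i + 1)) := by
  refine Disjoint.mono_right ?_ (gr.internal.submodule_iSupIndep i)
  exact iSup₂_le fun j hj => le_biSup _ (by omega : j ≠ i)

end ZGrading

lemma biSup_lt_succ' (f : ℤ → Submodule K V) (i : ℤ) :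
    (⨆ j < i + 1, f j) = (⨆ j < i, f j) ⊔ f i := by
  refine le_antisymm (iSup₂_le fun j hj => ?_)
    (sup_le (biSup_mono fun j (hj : j < i) => by omega)
      (le_biSup (s := {j : ℤ | j < i + 1}) f (show i ∈ _ by simp)))
  rcases eq_or_lt_of_le (by omega : j ≤ i) with h | h
  · exact h ▸ le_sup_right
  · exact le_trans (le_biSup (s := {j : ℤ | j < i}) f h) le_sup_left

lemma isCompl_step {α : Type*} [Lattice α] [BoundedOrder α] [IsModularLattice α]
    {a b c s : α} (h : IsCompl a s) (hbc : a = b ⊔ c) (hd : Disjoint b c) :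
    IsCompl b (s ⊔ c) := by
  have hb : b ≤ a := hbc ▸ le_sup_left
  have hc : c ≤ a := hbc ▸ le_sup_right
  constructor
  · rw [disjoint_iff]
    have h1 : (c ⊔ s) ⊓ a = c := by
      rw [sup_inf_assoc_of_le s hc, disjoint_iff.1 h.disjoint.symm, sup_bot_eq]
    calc b ⊓ (s ⊔ c) = (b ⊓ a) ⊓ (s ⊔ c) := by rw [inf_eq_left.2 hb]
      _ = b ⊓ ((c ⊔ s) ⊓ a) := by rw [inf_assoc, sup_comm s c, inf_comm (c ⊔ s) a]
      _ = b ⊓ c := by rw [h1]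
      _ = ⊥ := disjoint_iff.1 hd
  · rw [codisjoint_iff, sup_comm s c, ← sup_assoc, ← hbc, codisjoint_iff.1 h.codisjoint]

/-- Inductive complement lemma for filtrations. -/
lemma isCompl_filt_of (F w' : ℤ → Submodule K V)
    (hsup : ∀ i, F i = F (i + 1) ⊔ w' i)
    (hdisj : ∀ i, Disjoint (w' i) (F (i + 1)))
    {M : ℤ} (htop : ∀ i ≤ M, F i = ⊤) (hbot : ∀ j < M, w' j = ⊥) :
    ∀ i, IsCompl (F i) (⨆ j < i, w' j) := by
  have base : ∀ i ≤ M, IsCompl (F i) (⨆ j < i, w' j) := by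
    intro i hi
    have h1 : (⨆ j < i, w' j) = ⊥ :=
      le_bot_iff.1 <| iSup₂_le fun j hj => by rw [hbot j (by omega)]
    rw [h1, htop i hi]
    exact isCompl_top_bot
  have key : ∀ k : ℕ, IsCompl (F (M + k)) (⨆ j < M + (k : ℤ), w' j) := by
    intro k
    induction k with
    | zero => simpa using base M le_rfl
    | succ k ih =>
      have harith : (M + ((k + 1 : ℕ) : ℤ)) = (M + k) + 1 := by push_cast; ring
      rw [harith, biSup_lt_succ']
      exact isCompl_step ih (hsup (M + k)) (hdisj (M + k)).symm
  intro i
  by_cases hi : i ≤ M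
  · exact base i hi
  · have : i = M + ((i - M).toNat : ℤ) := by omega
    rw [this]
    exact key _

lemma inv_apply_apply (g : V ≃ₗ[K] V) (v : V) : (g⁻¹ : V ≃ₗ[K] V) (g v) = v := by
  show ((g⁻¹ * g : V ≃ₗ[K] V)) v = v
  rw [inv_mul_cancel]
  rfl

lemma mem_parabolicOf_iff {gr : ZGrading K V} {g : V ≃ₗ[K] V} :
    g ∈ parabolicOf gr ↔ ∀ i : ℤ, ∀ v : V, v ∈ gr.filt i ↔ g v ∈ gr.filt i := Iff.rfl

lemma parabolicOf_eq_of_filt_eq {gr gr' : ZGrading K V} (h : ∀ i, gr.filt i = gr'.filt i) :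
    parabolicOf gr = parabolicOf gr' := by
  ext g
  simp only [mem_parabolicOf_iff, h]

lemma ZGrading.cocharInto_top (gr : ZGrading K V) : cocharInto ⊤ gr := by
  classical
  intro t
  set e : (⨁ i, gr.w i) ≃ₗ[K] V :=
    LinearEquiv.ofBijective (DirectSum.coeLinearMap gr.w) gr.internal with he
  set D : (⨁ i, gr.w i) ≃ₗ[K] (⨁ i, gr.w i) :=
    DFinsupp.mapRange.linearEquiv (fun i => LinearEquiv.smulOfUnit (t ^ i)) with hD
  refine ⟨(e.symm.trans D).trans e, Subgroup.mem_top _, ?_⟩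
  intro i v hv
  have h1 : e (DirectSum.of (fun i => ↥(gr.w i)) i ⟨v, hv⟩) = v :=
    DirectSum.coeLinearMap_of _ _ _
  have h2 : e.symm v = DirectSum.of (fun i => ↥(gr.w i)) i ⟨v, hv⟩ := by
    rw [LinearEquiv.symm_apply_eq]; exact h1.symm
  have h3 : D (DirectSum.of (fun i => ↥(gr.w i)) i ⟨v, hv⟩) =
      DirectSum.of (fun i => ↥(gr.w i)) i ((t ^ i : Kˣ) • (⟨v, hv⟩ : gr.w i)) := by
    simp only [hD, DFinsupp.mapRange.linearEquiv_apply]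
    exact DFinsupp.mapRange_single (β₁ := fun i => ↥(gr.w i)) (β₂ := fun i => ↥(gr.w i))
      (f := fun i x => LinearEquiv.smulOfUnit (R := K) (t ^ i) x)
      (hf := fun i => map_zero _) (i := i) (b := (⟨v, hv⟩ : gr.w i))
  show e (D (e.symm v)) = _
  rw [h2, h3]
  have h4 : e (DirectSum.of (fun i => ↥(gr.w i)) i ((t ^ i : Kˣ) • (⟨v, hv⟩ : gr.w i))) =
      ((t ^ i : Kˣ) • (⟨v, hv⟩ : gr.w i) : gr.w i) := DirectSum.coeLinearMap_of _ _ _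
  rw [h4]
  simp [Units.smul_def]

lemma ZGrading.exists_transvection (gr : ZGrading K V) {i₀ : ℤ} {u : V}
    (hu : u ∈ gr.filt i₀) (ψ : Module.Dual K V)
    (hψ : ∀ x ∈ gr.filt (i₀ + 1), ψ x = 0) (hne : 1 + ψ u ≠ 0) :
    ∃ g ∈ parabolicOf gr, ∀ v, g v = v + ψ v • u := by
  set a : K := (1 + ψ u)⁻¹ with ha
  have haa : a * (1 + ψ u) = 1 := inv_mul_cancel₀ hne
  set S : V →ₗ[K] V := ψ.smulRight u with hSdef
  have hS : ∀ v, S v = ψ v • u := fun v => rfl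
  set f : V →ₗ[K] V := LinearMap.id + S with hfdef
  set f' : V →ₗ[K] V := LinearMap.id - a • S with hf'def
  have hf : ∀ v, f v = v + ψ v • u := fun v => rfl
  have hf' : ∀ v, f' v = v - (a * ψ v) • u := by
    intro v
    simp only [hf'def, LinearMap.sub_apply, LinearMap.id_apply, LinearMap.smul_apply, hS,
      smul_smul]
  have key1 : ∀ v, f (f' v) = v := by
    intro v
    rw [hf', hf, map_sub, map_smul, smul_eq_mul]
    match_scalars
    · ring
    · linear_combination (-ψ v) * haa
  have key2 : ∀ v, f' (f v) = v := by
    intro v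
    rw [hf, hf', map_add, map_smul, smul_eq_mul]
    match_scalars
    · ring
    · linear_combination (-ψ v) * haa
  have hstab : ∀ (r : K) (i : ℤ) (v : V), v ∈ gr.filt i → v + (r * ψ v) • u ∈ gr.filt i := by
    intro r i v hv
    by_cases hi : i ≤ i₀
    · exact add_mem hv (Submodule.smul_mem _ _ (gr.filt_anti hi hu))
    · rw [hψ v (gr.filt_anti (by omega) hv), mul_zero, zero_smul, add_zero]
      exact hv
  refine ⟨LinearEquiv.ofLinear f f' (LinearMap.ext key1) (LinearMap.ext key2), ?_, fun v => by
    show f v = _; rw [hf]⟩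
  intro i v
  constructor
  · intro hv
    show f v ∈ gr.filt i
    rw [hf]
    have := hstab 1 i v hv
    rwa [one_mul] at this
  · intro hv
    have h3 : f v - (a * ψ (f v)) • u = v := by
      rw [← hf']; exact key2 v
    have h2 : (v : V) = f v + ((-a) * ψ (f v)) • u := by
      rw [neg_mul, neg_smul, ← sub_eq_add_neg]
      exact h3.symm
    rw [h2]
    exact hstab (-a) i (f v) hv

end Aux


/-- **§1**: a closed subgroup `H ⊆ GL(V)` is `GL(V)`-completely reducible if and only if `V`
is a semisimple `H`-module. -/
theorem isCrIn_gl_iff_semisimple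
    {K V : Type*} [Field K] [IsAlgClosed K] [AddCommGroup V] [Module K V]
    [FiniteDimensional K V]
    (H : Subgroup (V ≃ₗ[K] V))
    (hH_closed : IsZariskiClosed K (glEmbed '' (H : Set (V ≃ₗ[K] V)))) :
    IsCrIn ⊤ H ↔
      ∀ U : Submodule K V, (∀ g ∈ H, ∀ u ∈ U, g u ∈ U) →
        ∃ U' : Submodule K V, (∀ g ∈ H, ∀ u ∈ U', g u ∈ U') ∧ IsCompl U U' := by
  constructor
  · -- G-cr implies semisimple
    intro hcr U hU
    by_cases hUbot : U = ⊥
    · exact ⟨⊤, fun g _ u _ => trivial, by rw [hUbot]; exact isCompl_bot_top⟩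
    obtain ⟨C, hC⟩ := Submodule.exists_isCompl U
    classical
    set w : ℤ → Submodule K V := fun i => if i = 0 then C else if i = 1 then U else ⊥ with hw
    have hw0 : w 0 = C := by simp [hw]
    have hw1 : w 1 = U := by simp [hw]
    have hsup : iSup w = ⊤ := by
      refine le_antisymm le_top ?_
      rw [← codisjoint_iff.1 hC.codisjoint]
      exact sup_le (le_iSup_of_le 1 (le_of_eq hw1.symm)) (le_iSup_of_le 0 (le_of_eq hw0.symm))
    have hind : iSupIndep w := by
      intro i
      by_cases h0 : i = 0
      · subst h0
        rw [hw0]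
        refine Disjoint.mono_right ?_ hC.disjoint.symm
        refine iSup₂_le fun j hj => ?_
        simp only [hw]
        rw [if_neg hj]
        by_cases h1 : j = 1
        · rw [if_pos h1]
        · rw [if_neg h1]; exact bot_le
      · by_cases h1 : i = 1
        · subst h1
          rw [hw1]
          refine Disjoint.mono_right ?_ hC.disjoint
          refine iSup₂_le fun j hj => ?_
          simp only [hw]
          rw [if_neg (by omega : j ≠ 1)]
          by_cases h0' : j = 0
          · rw [if_pos h0']
          · rw [if_neg h0']; exact bot_le
        · have hbi : w i = ⊥ := by simp [hw, h0, h1]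
          rw [hbi]
          exact disjoint_bot_left
    have hfin : {i : ℤ | w i ≠ ⊥}.Finite := by
      refine Set.Finite.subset ((Set.finite_singleton (1 : ℤ)).insert 0) ?_
      intro i hi
      by_contra h
      simp only [Set.mem_insert_iff, Set.mem_singleton_iff, not_or] at h
      exact hi (by simp [hw, h.1, h.2])
    set gr : ZGrading K V :=
      ⟨w, (DirectSum.isInternal_submodule_iff_iSupIndep_and_iSup_eq_top w).mpr ⟨hind, hsup⟩,
        hfin⟩ with hgr
    have hbotN : ∀ j : ℤ, (1 : ℤ) < j → gr.w j = ⊥ := by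
      intro j hj
      show (if j = 0 then C else if j = 1 then U else ⊥) = ⊥
      rw [if_neg (by omega : ¬ j = 0), if_neg (by omega : ¬ j = 1)]
    have hbotM : ∀ j : ℤ, j < (0 : ℤ) → gr.w j = ⊥ := by
      intro j hj
      show (if j = 0 then C else if j = 1 then U else ⊥) = ⊥
      rw [if_neg (by omega : ¬ j = 0), if_neg (by omega : ¬ j = 1)]
    have hfilt1 : gr.filt 1 = U := by
      refine le_antisymm (iSup₂_le fun j hj => ?_) ?_
      · by_cases h1 : j = 1
        · subst h1; exact le_of_eq hw1
        · rw [hbotN j (by omega)]; exact bot_le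
      · rw [← hw1]; exact gr.w_le_filt le_rfl
    have hHpar : H ≤ parabolicOf gr := by
      intro g hg
      intro i v
      by_cases hi : i ≤ 0
      · rw [gr.filt_eq_top hbotM hi]
        simp
      · by_cases hi1 : i = 1
        · subst hi1
          rw [hfilt1]
          constructor
          · exact hU g hg v
          · intro h
            have h2 := hU g⁻¹ (inv_mem hg) _ h
            rwa [inv_apply_apply] at h2
        · rw [gr.filt_eq_bot hbotN (by omega)]
          simp
    obtain ⟨L, ⟨gr2, hc2, hQ2, hL2⟩, hHL⟩ :=
      hcr (⊤ ⊓ parabolicOf gr) ⟨gr, gr.cocharInto_top, rfl⟩ (le_inf le_top hHpar)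
    have hpar_eq : parabolicOf gr = parabolicOf gr2 := by
      simpa [top_inf_eq] using hQ2
    have hHlev : H ≤ leviOf gr2 := le_trans hHL (le_trans (le_of_eq hL2) inf_le_right)
    have hUinv : ∀ g ∈ parabolicOf gr2, ∀ v : V, v ∈ U ↔ g v ∈ U := by
      intro g hg v
      have h2 : g ∈ parabolicOf gr := hpar_eq ▸ hg
      have := h2 1 v
      rwa [hfilt1] at this
    obtain ⟨N2, hN2⟩ := gr2.exists_bound_above
    obtain ⟨M2, hM2⟩ := gr2.exists_bound_below
    have hbdd : ∀ z : ℤ, U ≤ gr2.filt z → z ≤ N2 := by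
      intro z hz
      by_contra h
      rw [gr2.filt_eq_bot hN2 (by omega)] at hz
      exact hUbot (le_bot_iff.1 hz)
    obtain ⟨i₀, hi₀, hmax⟩ :=
      Int.exists_greatest_of_bdd ⟨N2, hbdd⟩
        ⟨M2, by rw [gr2.filt_eq_top hM2 le_rfl]; exact le_top⟩
    have hnotle : ¬ U ≤ gr2.filt (i₀ + 1) := by
      intro h
      have h2 := hmax _ h
      omega
    obtain ⟨w0, hw0U, hw0F⟩ := SetLike.not_le_iff_exists.1 hnotle
    obtain ⟨ψ0, hψ0ne, hψ0bot⟩ :=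
      Submodule.exists_dual_map_eq_bot_of_notMem hw0F inferInstance
    set ψ : Module.Dual K V := (ψ0 w0)⁻¹ • ψ0 with hψdef
    have hψw0 : ψ w0 = 1 := by
      simp [hψdef, inv_mul_cancel₀ hψ0ne]
    have hψF : ∀ x ∈ gr2.filt (i₀ + 1), ψ x = 0 := by
      intro x hx
      have h2 : ψ0 x ∈ Submodule.map ψ0 (gr2.filt (i₀ + 1)) := Submodule.mem_map_of_mem hx
      rw [hψ0bot, Submodule.mem_bot] at h2
      simp [hψdef, h2]
    have hkey : gr2.filt i₀ ≤ U := by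
      intro u hu
      have main : ∀ u' ∈ gr2.filt i₀, 1 + ψ u' ≠ 0 → w0 + u' ∈ U := by
        intro u' hu' hne
        obtain ⟨g, hgpar, hgapp⟩ := gr2.exists_transvection hu' ψ hψF hne
        have h2 := (hUinv g hgpar w0).1 hw0U
        rwa [hgapp w0, hψw0, one_smul] at h2
      by_cases hcc : 1 + ψ u = 0
      · have hψu : ψ u = -1 := by linear_combination hcc
        have h1 : w0 + (u + w0) ∈ U :=
          main (u + w0) (add_mem hu (hi₀ hw0U)) (by rw [map_add, hψu, hψw0]; norm_num)
        have h2 := sub_mem (sub_mem h1 hw0U) hw0U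
        have h3 : w0 + (u + w0) - w0 - w0 = u := by abel
        rwa [h3] at h2
      · have h1 := main u hu hcc
        have h2 := sub_mem h1 hw0U
        have h3 : w0 + u - w0 = u := by abel
        rwa [h3] at h2
    have hUeq : U = gr2.filt i₀ := le_antisymm hi₀ hkey
    refine ⟨⨆ j < i₀, gr2.w j, ?_, ?_⟩
    · intro g hg u hu
      have hmap : Submodule.map (g : V →ₗ[K] V) (⨆ j < i₀, gr2.w j) ≤ ⨆ j < i₀, gr2.w j := by
        simp only [Submodule.map_iSup]
        refine iSup₂_le fun j hj => le_trans ?_ (le_biSup (s := {j : ℤ | j < i₀}) gr2.w hj)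
        rintro x ⟨y, hy, rfl⟩
        exact (hHlev hg j y).1 hy
      exact hmap (Submodule.mem_map_of_mem hu)
    · rw [hUeq]
      exact isCompl_filt_of gr2.filt gr2.w
        (fun i => by rw [gr2.filt_eq_sup i, sup_comm])
        gr2.disjoint_w_filt_succ
        (fun i hi => gr2.filt_eq_top hM2 hi) hM2 i₀
  · -- semisimple implies G-cr
    intro hss Q hQ hHQ
    obtain ⟨gr, -, rfl⟩ := hQ
    have hHP : H ≤ parabolicOf gr := le_trans hHQ inf_le_right
    have hstab : ∀ i : ℤ, ∀ g ∈ H, ∀ u ∈ gr.filt i, g u ∈ gr.filt i :=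
      fun i g hg u hu => (hHP hg i u).1 hu
    choose C hCstab hCcompl using
      fun i : ℤ => hss (gr.filt (i + 1)) (fun g hg u hu => hstab (i + 1) g hg u hu)
    set w' : ℤ → Submodule K V := fun i => gr.filt i ⊓ C i with hw'
    have f1 : ∀ i, gr.filt i = gr.filt (i + 1) ⊔ w' i := by
      intro i
      calc gr.filt i = (gr.filt (i + 1) ⊔ C i) ⊓ gr.filt i := by
            rw [codisjoint_iff.1 (hCcompl i).codisjoint, top_inf_eq]
        _ = gr.filt (i + 1) ⊔ (C i ⊓ gr.filt i) :=
            sup_inf_assoc_of_le _ (gr.filt_anti (by omega))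
        _ = gr.filt (i + 1) ⊔ w' i := by rw [hw', inf_comm]
    have f2 : ∀ i, Disjoint (w' i) (gr.filt (i + 1)) :=
      fun i => Disjoint.mono_left inf_le_right (hCcompl i).disjoint.symm
    have f3 : ∀ i, gr.w i = ⊥ → w' i = ⊥ := by
      intro i h
      have h2 : gr.filt i = gr.filt (i + 1) := by rw [gr.filt_eq_sup i, h, bot_sup_eq]
      exact (f2 i).eq_bot_of_le (le_trans inf_le_left (le_of_eq h2))
    obtain ⟨N, hN⟩ := gr.exists_bound_above
    obtain ⟨M, hM⟩ := gr.exists_bound_below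
    have hN' : ∀ j, N < j → w' j = ⊥ := fun j hj => f3 j (hN j hj)
    have hM' : ∀ j, j < M → w' j = ⊥ := fun j hj => f3 j (hM j hj)
    set F' : ℤ → Submodule K V := fun i => ⨆ j ≥ i, w' j with hF'
    have hF'le : ∀ i, F' i ≤ gr.filt i :=
      fun i => iSup₂_le fun j hj => le_trans inf_le_left (gr.filt_anti hj)
    have hw'leF' : ∀ {i j : ℤ}, i ≤ j → w' j ≤ F' i :=
      fun {i j} h => le_biSup (s := {j : ℤ | j ≥ i}) w' h
    have hF'anti : ∀ {i i' : ℤ}, i ≤ i' → F' i' ≤ F' i :=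
      fun {i i'} h => biSup_mono fun j hj => le_trans h hj
    have hF'eq : ∀ i, F' i = gr.filt i := by
      have key : ∀ k : ℕ, gr.filt (N + 1 - k) ≤ F' (N + 1 - k) := by
        intro k
        induction k with
        | zero =>
          have h0 : gr.filt (N + 1 - ((0 : ℕ) : ℤ)) = ⊥ :=
            gr.filt_eq_bot hN (by push_cast; omega)
          rw [h0]
          exact bot_le
        | succ k ih =>
          have harith : (N + 1 - ((k + 1 : ℕ) : ℤ)) + 1 = N + 1 - (k : ℕ) := by
            push_cast; ring
          rw [f1 (N + 1 - ((k + 1 : ℕ) : ℤ))]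
          refine sup_le ?_ (hw'leF' le_rfl)
          have hstep : gr.filt ((N + 1 - ((k + 1 : ℕ) : ℤ)) + 1) ≤
              F' ((N + 1 - ((k + 1 : ℕ) : ℤ)) + 1) := by
            rw [harith]; exact ih
          exact le_trans hstep (hF'anti (by omega))
      intro i
      refine le_antisymm (hF'le i) ?_
      by_cases hi : N + 1 ≤ i
      · rw [gr.filt_eq_bot hN (by omega)]
        exact bot_le
      · have h2 : i = N + 1 - ((N + 1 - i).toNat : ℤ) := by omega
        rw [h2]
        exact key _
    have f7 : ∀ i, IsCompl (gr.filt i) (⨆ j < i, w' j) :=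
      isCompl_filt_of gr.filt w' f1 f2 (fun i hi => gr.filt_eq_top hM hi) hM'
    have f6 : iSupIndep w' := by
      intro i
      have hle : (⨆ j, ⨆ (_ : j ≠ i), w' j) ≤ (⨆ j < i, w' j) ⊔ gr.filt (i + 1) := by
        refine iSup₂_le fun j hj => ?_
        rcases lt_or_gt_of_ne hj with h | h
        · exact le_trans (le_biSup (s := {j : ℤ | j < i}) w' h) le_sup_left
        · exact le_trans (le_trans inf_le_left (gr.filt_anti (by omega))) le_sup_right
      refine Disjoint.mono_right hle ?_
      rw [disjoint_iff]
      have h1 : ((⨆ j < i, w' j) ⊔ gr.filt (i + 1)) ⊓ gr.filt i = gr.filt (i + 1) := by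
        rw [sup_comm, sup_inf_assoc_of_le _ (gr.filt_anti (by omega : i ≤ i + 1)),
          disjoint_iff.1 (f7 i).disjoint.symm, sup_bot_eq]
      calc w' i ⊓ ((⨆ j < i, w' j) ⊔ gr.filt (i + 1))
          = (w' i ⊓ gr.filt i) ⊓ ((⨆ j < i, w' j) ⊔ gr.filt (i + 1)) := by
            rw [inf_eq_left.2 inf_le_left]
        _ = w' i ⊓ (((⨆ j < i, w' j) ⊔ gr.filt (i + 1)) ⊓ gr.filt i) := by
            rw [inf_assoc, inf_comm (gr.filt i)]
        _ = w' i ⊓ gr.filt (i + 1) := by rw [h1]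
        _ = ⊥ := disjoint_iff.1 (f2 i)
    have hiSup : iSup w' = ⊤ := by
      refine le_antisymm le_top ?_
      rw [← gr.filt_eq_top hM le_rfl, ← hF'eq M]
      exact iSup₂_le fun j _ => le_iSup w' j
    have hfin : {i : ℤ | w' i ≠ ⊥}.Finite := by
      refine gr.finiteSupport.subset fun i hi => ?_
      simp only [Set.mem_setOf_eq] at hi ⊢
      exact fun h => hi (f3 i h)
    set gr' : ZGrading K V :=
      ⟨w', (DirectSum.isInternal_submodule_iff_iSupIndep_and_iSup_eq_top w').mpr
        ⟨f6, hiSup⟩, hfin⟩ with hgr'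
    have hfilt' : ∀ i, gr'.filt i = gr.filt i := fun i => hF'eq i
    have hpar' : parabolicOf gr' = parabolicOf gr := parabolicOf_eq_of_filt_eq hfilt'
    refine ⟨⊤ ⊓ leviOf gr', ⟨gr', gr'.cocharInto_top, by rw [hpar'], rfl⟩, ?_⟩
    refine le_inf le_top ?_
    intro g hg
    intro i v
    have fwd : ∀ g' ∈ H, ∀ x ∈ w' i, g' x ∈ w' i := by
      intro g' hg' x hx
      obtain ⟨hx1, hx2⟩ := Submodule.mem_inf.1 hx
      exact Submodule.mem_inf.2 ⟨hstab i g' hg' x hx1, hCstab i g' hg' x hx2⟩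
    constructor
    · exact fun hv => fwd g hg v hv
    · intro hv
      have h2 := fwd g⁻¹ (inv_mem hg) _ hv
      rwa [inv_apply_apply] at h2
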